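/- arXiv:math/9301219 — 3 statements merged into one kernel-verified Lean document; each statement's English description precedes it below -/
import Mathlib

section
/- Let p be the orthogonal projection of ℓ²(ℤ) onto the closed span of {e_i : i ≥ 0}, and let u₀ be the bilateral shift. Then the commutator p ∘ u₀ - u₀ ∘ p is a compact operator (in fact of rank one). -/
noncomputable section

/-- `H` is `ℓ²(ℤ)`. -/
abbrev HZ : Type := lp (fun _ : ℤ => ℂ) 2

/-- The standard orthonormal basis vectors `e i` of `ℓ²(ℤ)`. -/
noncomputable def e (i : ℤ) : HZ := lp.single 2 i (1 : ℂ)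

open InnerProductSpace

theorem InnerProductSpace.isCompactOperator_rankOne {𝕜 E F : Type*} [RCLike 𝕜]
    [NormedAddCommGroup E] [InnerProductSpace 𝕜 E] [NormedAddCommGroup F]
    [InnerProductSpace 𝕜 F] (x : E) (y : F) : IsCompactOperator (rankOne 𝕜 x y) :=
  (isCompactOperator_of_locallyCompactSpace_rng
    (ContinuousLinearMap.toSpanSingleton 𝕜 x)).comp_clm (innerSL 𝕜 y)

theorem lp.ext_continuousLinearMap_single_one {ι 𝕜 F : Type*} [DecidableEq ι] [NormedField 𝕜]
    [AddCommMonoid F] [Module 𝕜 F] [TopologicalSpace F] [T2Space F]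
    {p : ENNReal} [Fact (1 ≤ p)] (hp : p ≠ ⊤) ⦃f g : lp (fun _ : ι => 𝕜) p →L[𝕜] F⦄
    (h : ∀ i, f (lp.single p i 1) = g (lp.single p i 1)) : f = g := by
  refine lp.ext_continuousLinearMap hp fun i => ?_
  ext
  exact h i

theorem ext_e ⦃f g : HZ →L[ℂ] HZ⦄ (h : ∀ i, f (e i) = g (e i)) : f = g :=
  lp.ext_continuousLinearMap_single_one ENNReal.ofNat_ne_top h

theorem inner_e_e (i j : ℤ) : inner ℂ (e i) (e j) = if i = j then 1 else 0 := by
  rw [e, lp.inner_single_left, e, lp.single_apply, Pi.single_apply]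
  simp

/-- The two orders of shifting and cutting off below `0` differ only on `e (-1)`, which one keeps
(as `e 0`) and the other kills. -/
theorem shift_projection_commutator_eq_rankOne (u₀ p : HZ →L[ℂ] HZ)
    (hu : ∀ i : ℤ, u₀ (e i) = e (i + 1))
    (hp : ∀ i : ℤ, p (e i) = if 0 ≤ i then e i else 0) :
    p ∘L u₀ - u₀ ∘L p = rankOne ℂ (e 0) (e (-1)) := by
  refine ext_e fun i => ?_
  simp only [sub_apply, ContinuousLinearMap.comp_apply, rankOne_apply, inner_e_e, hu, hp]
  rcases lt_trichotomy i (-1) with hi | rfl | hi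
  · simp [show ¬0 ≤ i + 1 by omega, show ¬0 ≤ i by omega, hi.ne']
  · simp
  · simp [show 0 ≤ i + 1 by omega, show 0 ≤ i by omega, hi.ne, hu]

theorem stmt1_general (u₀ p : HZ →L[ℂ] HZ)
    (hu : ∀ i : ℤ, u₀ (e i) = e (i + 1))
    (hp : ∀ i : ℤ, p (e i) = if 0 ≤ i then e i else 0) :
    IsCompactOperator ⇑(p ∘L u₀ - u₀ ∘L p) := by
  rw [shift_projection_commutator_eq_rankOne u₀ p hu hp]
  exact isCompactOperator_rankOne _ _

/-- If `u₀` is the bilateral shift (`u₀ (e i) = e (i+1)`) and `p` is the orthogonal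
projection onto the closed span of `{e i : i ≥ 0}` (characterized by `p (e i) = e i`
for `i ≥ 0` and `p (e i) = 0` for `i < 0`, together with `p` being a self-adjoint
idempotent), then the commutator `p ∘ u₀ - u₀ ∘ p` is a compact operator. -/
theorem stmt1 (u₀ p : HZ →L[ℂ] HZ)
    (hu : ∀ i : ℤ, u₀ (e i) = e (i + 1))
    (hp : ∀ i : ℤ, p (e i) = if 0 ≤ i then e i else 0)
    (hidem : p ∘L p = p) (hsa : IsSelfAdjoint p) :
    IsCompactOperator ⇑(p ∘L u₀ - u₀ ∘L p) :=
  stmt1_general u₀ p hu hp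
end
end

section
/- If u is a unitary operator on a Hilbert space H, p is an orthogonal projection on H, and b = p u (1-p) and c = (1-p) u p are both partial isometries, then a = p u p satisfies: p - a*a and p - aa* are orthogonal projections. -/
/-!
Compressing `u*u = 1` and `uu* = 1` to the corner `pH` of `H = pH ⊕ (1-p)H` gives
`a*a + c*c = p` and `aa* + bb* = p`. Hence `p - a*a = c*c` and `p - aa* = bb*`, and for a
partial isometry `v` both `v*v` and `vv*` are projections.
-/

section

variable {R : Type*}

def IsPartialIsometry [Mul R] [Star R] (v : R) : Prop :=
  v * star v * v = v

namespace IsPartialIsometry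

variable [Semigroup R] [StarMul R] {v : R}

theorem isStarProjection_star_mul_self (hv : IsPartialIsometry v) :
    IsStarProjection (star v * v) where
  isIdempotentElem := by
    change star v * v * (star v * v) = star v * v
    rw [← mul_assoc, mul_assoc (star v) v, mul_assoc (star v), hv]
  isSelfAdjoint := .star_mul_self v

theorem isStarProjection_mul_star_self (hv : IsPartialIsometry v) :
    IsStarProjection (v * star v) where
  isIdempotentElem := by
    change v * star v * (v * star v) = v * star v
    rw [← mul_assoc, hv]
  isSelfAdjoint := .mul_star_self v

end IsPartialIsometry

namespace IsStarProjection

variable [Ring R] [StarRing R] {p u : R}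

theorem star_mul_add_star_mul_of_star_mul_self_eq_one (hp : IsStarProjection p)
    (hu : star u * u = 1) :
    star (p * u * p) * (p * u * p) + star ((1 - p) * u * p) * ((1 - p) * u * p) = p := by
  have hpp : p * p = p := hp.isIdempotentElem
  have hqq : (1 - p) * (1 - p) = 1 - p := hp.isIdempotentElem.one_sub
  calc _ = p * star u * (p * p + (1 - p) * (1 - p)) * u * p := by
          simp only [star_mul, hp.isSelfAdjoint.star_eq, hp.one_sub.isSelfAdjoint.star_eq]
          noncomm_ring
    _ = p * (star u * u) * p := by rw [hpp, hqq, add_sub_cancel]; noncomm_ring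
    _ = p := by rw [hu, mul_one, hpp]

theorem mul_star_add_mul_star_of_mul_star_self_eq_one (hp : IsStarProjection p)
    (hu : u * star u = 1) :
    (p * u * p) * star (p * u * p) + (p * u * (1 - p)) * star (p * u * (1 - p)) = p := by
  have h := hp.star_mul_add_star_mul_of_star_mul_self_eq_one (u := star u) (by rwa [star_star])
  simpa only [star_mul, star_star, star_sub, star_one, hp.isSelfAdjoint.star_eq, mul_assoc]
    using h

end IsStarProjection

end

/-- Let `u` be a unitary operator on a complex Hilbert space `H` and `p` an orthogonal
projection (self-adjoint idempotent).  If `b = p u (1-p)` and `c = (1-p) u p` are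
partial isometries, then `a = p u p` satisfies: `p - a* a` and `p - a a*` are
orthogonal projections (self-adjoint idempotents). -/
theorem stmt3 {H : Type*} [NormedAddCommGroup H] [InnerProductSpace ℂ H]
    [CompleteSpace H]
    (u p : H →L[ℂ] H)
    (hu : u ∈ unitary (H →L[ℂ] H))
    (hpidem : IsIdempotentElem p) (hpsa : IsSelfAdjoint p)
    (hb : (p * u * (1 - p)) * star (p * u * (1 - p)) * (p * u * (1 - p)) = p * u * (1 - p))
    (hc : ((1 - p) * u * p) * star ((1 - p) * u * p) * ((1 - p) * u * p) = (1 - p) * u * p) :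
    (IsIdempotentElem (p - star (p * u * p) * (p * u * p)) ∧
      IsSelfAdjoint (p - star (p * u * p) * (p * u * p))) ∧
    (IsIdempotentElem (p - (p * u * p) * star (p * u * p)) ∧
      IsSelfAdjoint (p - (p * u * p) * star (p * u * p))) := by
  have hp : IsStarProjection p := ⟨hpidem, hpsa⟩
  have hcols := hp.star_mul_add_star_mul_of_star_mul_self_eq_one hu.1
  have hrows := hp.mul_star_add_mul_star_of_mul_star_self_eq_one hu.2
  rw [sub_eq_of_eq_add' hcols.symm, sub_eq_of_eq_add' hrows.symm]
  have hbproj := IsPartialIsometry.isStarProjection_mul_star_self hb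
  have hcproj := IsPartialIsometry.isStarProjection_star_mul_self hc
  exact ⟨⟨hcproj.isIdempotentElem, hcproj.isSelfAdjoint⟩,
    hbproj.isIdempotentElem, hbproj.isSelfAdjoint⟩
end

section
/- Let x be an invertible bounded operator on a Hilbert space H and let p be an orthogonal projection such that xp - px is compact. Then pxp, viewed as an operator on pH, is a Fredholm operator. -/
noncomputable section

/-- Let `x` be an invertible bounded operator on a complex separable Hilbert space `H`
and `p` an orthogonal projection with `pH` and `(1-p)H` infinite-dimensional, such that
`xp - px` is compact.  Then `pxp`, viewed as an operator `T` on `pH` (the range of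
`p`), is a Fredholm operator, i.e. invertible modulo compact operators on `pH`. -/
theorem stmt5 {H : Type*} [NormedAddCommGroup H] [InnerProductSpace ℂ H]
    [CompleteSpace H] [TopologicalSpace.SeparableSpace H]
    (x p : H →L[ℂ] H)
    (hx : IsUnit x)
    (hpidem : IsIdempotentElem p) (hpsa : IsSelfAdjoint p)
    (hinf₁ : ¬ FiniteDimensional ℂ (LinearMap.range (p : H →ₗ[ℂ] H)))
    (hinf₂ : ¬ FiniteDimensional ℂ (LinearMap.range ((1 - p : H →L[ℂ] H) : H →ₗ[ℂ] H)))
    (hcomm : IsCompactOperator ⇑(x * p - p * x))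
    (T : LinearMap.range (p : H →ₗ[ℂ] H) →L[ℂ] LinearMap.range (p : H →ₗ[ℂ] H))
    (hT : ∀ ξ : LinearMap.range (p : H →ₗ[ℂ] H), (T ξ : H) = p (x (ξ : H))) :
    ∃ S : LinearMap.range (p : H →ₗ[ℂ] H) →L[ℂ] LinearMap.range (p : H →ₗ[ℂ] H),
      IsCompactOperator ⇑(S ∘L T - ContinuousLinearMap.id ℂ (LinearMap.range (p : H →ₗ[ℂ] H))) ∧
      IsCompactOperator ⇑(T ∘L S - ContinuousLinearMap.id ℂ (LinearMap.range (p : H →ₗ[ℂ] H))) := by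
  obtain ⟨u, rfl⟩ := hx
  set y : H →L[ℂ] H := ↑u⁻¹ with hy
  have hyxv : ∀ v : H, y ((u : H →L[ℂ] H) v) = v := fun v => by
    rw [hy, ← ContinuousLinearMap.mul_apply, ← Units.val_mul]
    simp
  have hxyv : ∀ v : H, (u : H →L[ℂ] H) (y v) = v := fun v => by
    rw [hy, ← ContinuousLinearMap.mul_apply, ← Units.val_mul]
    simp
  have hpv : ∀ ξ : LinearMap.range (p : H →ₗ[ℂ] H), p (ξ : H) = (ξ : H) := by
    rintro ⟨_, v, rfl⟩
    have := DFunLike.congr_fun hpidem v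
    simpa using this
  have hmem : ∀ v : H, p v ∈ LinearMap.range (p : H →ₗ[ℂ] H) := fun v => LinearMap.mem_range_self _ v
  set π : H →L[ℂ] LinearMap.range (p : H →ₗ[ℂ] H) := p.codRestrict (LinearMap.range (p : H →ₗ[ℂ] H)) hmem with hπ
  set ι : LinearMap.range (p : H →ₗ[ℂ] H) →L[ℂ] H := (LinearMap.range (p : H →ₗ[ℂ] H)).subtypeL with hι
  refine ⟨π ∘L y ∘L ι, ?_, ?_⟩
  · have hc : IsCompactOperator ⇑(p * ↑u - ↑u * p : H →L[ℂ] H) := by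
      have h1 := hcomm.neg
      have e : ⇑(p * ↑u - ↑u * p : H →L[ℂ] H)
          = fun v => -((↑u * p - p * ↑u : H →L[ℂ] H) v) := by
        funext v
        simp [ContinuousLinearMap.sub_apply, neg_sub]
      rw [e]; exact h1
    have key : ⇑((π ∘L y ∘L ι) ∘L T - ContinuousLinearMap.id ℂ (LinearMap.range (p : H →ₗ[ℂ] H)))
        = ⇑π ∘ ⇑y ∘ ⇑(p * ↑u - ↑u * p : H →L[ℂ] H) ∘ ⇑ι := by
      funext ξ
      apply Subtype.ext
      simp only [ContinuousLinearMap.sub_apply, ContinuousLinearMap.comp_apply,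
        ContinuousLinearMap.id_apply, Function.comp_apply, hπ, hι,
        ContinuousLinearMap.coe_codRestrict_apply, Submodule.coe_subtypeL',
        Submodule.coe_subtype, AddSubgroupClass.coe_sub]
      rw [hT ξ]
      simp [ContinuousLinearMap.sub_apply, ContinuousLinearMap.mul_apply,
        map_sub, hpv, hyxv]
    rw [key]
    exact ((hc.comp_clm ι).clm_comp y).clm_comp π
  · have hd : IsCompactOperator ⇑(p * y - y * p : H →L[ℂ] H) := by
      have h1 : IsCompactOperator (⇑y ∘ ⇑(↑u * p - p * ↑u : H →L[ℂ] H) ∘ ⇑y) :=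
        (hcomm.comp_clm y).clm_comp y
      have e : ⇑(p * y - y * p : H →L[ℂ] H)
          = ⇑y ∘ ⇑(↑u * p - p * ↑u : H →L[ℂ] H) ∘ ⇑y := by
        funext v
        simp [ContinuousLinearMap.sub_apply, ContinuousLinearMap.mul_apply,
          map_sub, hyxv, hxyv]
      rw [e]; exact h1
    have key : ⇑(T ∘L (π ∘L y ∘L ι) - ContinuousLinearMap.id ℂ (LinearMap.range (p : H →ₗ[ℂ] H)))
        = ⇑π ∘ ⇑(↑u : H →L[ℂ] H) ∘ ⇑(p * y - y * p : H →L[ℂ] H) ∘ ⇑ι := by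
      funext ξ
      apply Subtype.ext
      simp only [ContinuousLinearMap.sub_apply, ContinuousLinearMap.comp_apply,
        ContinuousLinearMap.id_apply, Function.comp_apply, hπ, hι,
        ContinuousLinearMap.coe_codRestrict_apply, Submodule.coe_subtypeL',
        Submodule.coe_subtype, AddSubgroupClass.coe_sub]
      rw [hT]
      simp [ContinuousLinearMap.sub_apply, ContinuousLinearMap.mul_apply,
        ContinuousLinearMap.coe_codRestrict_apply, map_sub, hpv, hxyv]
    rw [key]
    exact ((hd.comp_clm ι).clm_comp (↑u : H →L[ℂ] H)).clm_comp π
end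
end
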